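/- arXiv:2301.04318 — 2 statements merged into one kernel-verified Lean document; each statement's English description precedes it below -/
import Mathlib

section
/- (Core of Theorem 2, APPNP.) Let Â be an N×N real symmetric positive definite matrix, let 0 < α < 1, and let M and H⁰ be N×d real matrices (M playing the role of H^{(l−1)}Θ^{(l)}). Then the function J(H) = −Tr(Hᵀ M) + (1/(2(1−α)))·Tr(Hᵀ Â⁻¹ (H − 2α H⁰)) over N×d real matrices H attains its global minimum at the unique point H* = (1−α)·Â·M + α·H⁰. -/
/-!
With `B = Â⁻¹` and `c = 1/(2(1-α))`, the choice of `H*` is exactly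
`B H* = (1-α) M + α B H⁰`, which lets one complete the square:
`J(H) = c (Tr((H - H*)ᵀ B (H - H*)) - Tr(H*ᵀ B H*))`.
Since `B` is again positive definite, the quadratic term is nonnegative and vanishes only at
`H = H*`, column by column.
-/

open Matrix

namespace Matrix

variable {m n R : Type*} [Fintype m] [Fintype n]

theorem trace_transpose_mul_mul_self_eq_sum [CommSemiring R] (B : Matrix n n R)
    (D : Matrix n m R) :
    (Dᵀ * B * D).trace = ∑ j, (fun i => D i j) ⬝ᵥ B *ᵥ fun i => D i j := by
  refine Finset.sum_congr rfl fun j _ => ?_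
  rw [diag_apply, mul_apply', dotProduct_mulVec]
  rfl

theorem IsSymm.trace_transpose_mul_mul_comm [CommSemiring R] {B : Matrix n n R} (hB : B.IsSymm)
    (X Y : Matrix n m R) : (Xᵀ * B * Y).trace = (Yᵀ * B * X).trace := by
  rw [← trace_transpose, transpose_mul, transpose_mul, transpose_transpose, hB.eq,
    Matrix.mul_assoc]

theorem IsSymm.trace_transpose_mul_mul_sub_self [CommRing R] {B : Matrix n n R} (hB : B.IsSymm)
    (X Y : Matrix n m R) :
    ((X - Y)ᵀ * B * (X - Y)).trace
      = (Xᵀ * B * X).trace - 2 * (Xᵀ * B * Y).trace + (Yᵀ * B * Y).trace := by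
  rw [transpose_sub, Matrix.sub_mul, Matrix.sub_mul, Matrix.mul_sub, Matrix.mul_sub, trace_sub,
    trace_sub, trace_sub, hB.trace_transpose_mul_mul_comm Y X]
  ring

theorem PosDef.trace_transpose_mul_mul_self_nonneg {B : Matrix n n ℝ} (hB : B.PosDef)
    (D : Matrix n m ℝ) : 0 ≤ (Dᵀ * B * D).trace :=
  (hB.posSemidef.conjTranspose_mul_mul_same D).trace_nonneg

theorem PosDef.trace_transpose_mul_mul_self_eq_zero_iff {B : Matrix n n ℝ} (hB : B.PosDef)
    (D : Matrix n m ℝ) : (Dᵀ * B * D).trace = 0 ↔ D = 0 := by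
  have hcol : ∀ v : n → ℝ, 0 ≤ v ⬝ᵥ B *ᵥ v := hB.posSemidef.dotProduct_mulVec_nonneg
  rw [trace_transpose_mul_mul_self_eq_sum, Finset.sum_eq_zero_iff_of_nonneg fun j _ => hcol _]
  refine ⟨fun h => ?_, by rintro rfl; simp⟩
  ext i j
  by_contra hij
  have hcol_ne : (fun i => D i j) ≠ 0 := fun h0 => hij (congrFun h0 i)
  exact (hB.dotProduct_mulVec_pos hcol_ne).ne' (by simpa using h j (Finset.mem_univ j))

end Matrix

theorem appnp_objective_eq_sub_quadratic {m n : Type*} [Fintype m] [Fintype n] {α : ℝ}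
    (hα : α ≠ 1) {B : Matrix n n ℝ} (hB : B.IsSymm) {M H0 K : Matrix n m ℝ}
    (hK : B * K = (1 - α) • M + α • (B * H0)) (X : Matrix n m ℝ) :
    -(Xᵀ * M).trace + 1 / (2 * (1 - α)) * (Xᵀ * B * (X - (2 * α) • H0)).trace
      = 1 / (2 * (1 - α)) * (((X - K)ᵀ * B * (X - K)).trace - (Kᵀ * B * K).trace) := by
  have hXBK : (Xᵀ * B * K).trace = (1 - α) * (Xᵀ * M).trace + α * (Xᵀ * B * H0).trace := by
    rw [Matrix.mul_assoc, hK, Matrix.mul_add, Matrix.mul_smul, Matrix.mul_smul, trace_add,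
      trace_smul, trace_smul, smul_eq_mul, smul_eq_mul, Matrix.mul_assoc]
  have hα' : 1 - α ≠ 0 := sub_ne_zero.mpr hα.symm
  rw [hB.trace_transpose_mul_mul_sub_self, hXBK, Matrix.mul_sub, Matrix.mul_smul, trace_sub,
    trace_smul, smul_eq_mul]
  field_simp
  ring

theorem stmt_5_general {N d : ℕ} (α : ℝ) (hα1 : α < 1)
    (Ahat : Matrix (Fin N) (Fin N) ℝ) (hPD : Ahat.PosDef)
    (M H0 : Matrix (Fin N) (Fin d) ℝ) :
    let J : Matrix (Fin N) (Fin d) ℝ → ℝ :=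
      fun H => -(Hᵀ * M).trace + (1 / (2 * (1 - α))) * (Hᵀ * Ahat⁻¹ * (H - (2 * α) • H0)).trace
    let Hstar : Matrix (Fin N) (Fin d) ℝ := (1 - α) • (Ahat * M) + α • H0
    ∀ H : Matrix (Fin N) (Fin d) ℝ,
      J Hstar ≤ J H ∧ (J Hstar = J H ↔ H = Hstar) := by
  intro J Hstar H
  have hB : Ahat⁻¹.PosDef := hPD.inv
  have hK : Ahat⁻¹ * Hstar = (1 - α) • M + α • (Ahat⁻¹ * H0) := by
    rw [Matrix.mul_add, Matrix.mul_smul, Matrix.mul_smul,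
      nonsing_inv_mul_cancel_left _ _ ((isUnit_iff_isUnit_det _).mp hPD.isUnit)]
  have hc : 0 < 1 / (2 * (1 - α)) := by
    have : 0 < 1 - α := sub_pos.mpr hα1
    positivity
  have hJ :=
    appnp_objective_eq_sub_quadratic hα1.ne (isHermitian_iff_isSymm.mp hB.isHermitian) hK
  have hgap :
      J H - J Hstar = 1 / (2 * (1 - α)) * ((H - Hstar)ᵀ * Ahat⁻¹ * (H - Hstar)).trace := by
    simp only [J, hJ, sub_self, Matrix.transpose_zero, Matrix.zero_mul, trace_zero]
    ring
  refine ⟨?_, ?_⟩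
  · linarith [mul_nonneg hc.le (hB.trace_transpose_mul_mul_self_nonneg (H - Hstar))]
  · rw [eq_comm, ← sub_eq_zero, hgap, mul_eq_zero, or_iff_right hc.ne',
      hB.trace_transpose_mul_mul_self_eq_zero_iff, sub_eq_zero]

/-- Core of Theorem 2 (APPNP): for `Â` symmetric positive definite and `0 < α < 1`, the
function `J(H) = -Tr(Hᵀ M) + (1/(2(1-α))) Tr(Hᵀ Â⁻¹ (H - 2α H⁰))` attains its global
minimum at the unique point `H* = (1-α) Â M + α H⁰`. -/
theorem stmt_5 {N d : ℕ} (α : ℝ) (hα0 : 0 < α) (hα1 : α < 1)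
    (Ahat : Matrix (Fin N) (Fin N) ℝ) (hPD : Ahat.PosDef)
    (M H0 : Matrix (Fin N) (Fin d) ℝ) :
    let J : Matrix (Fin N) (Fin d) ℝ → ℝ :=
      fun H => -(Hᵀ * M).trace + (1 / (2 * (1 - α))) * (Hᵀ * Ahat⁻¹ * (H - (2 * α) • H0)).trace
    let Hstar : Matrix (Fin N) (Fin d) ℝ := (1 - α) • (Ahat * M) + α • H0
    ∀ H : Matrix (Fin N) (Fin d) ℝ,
      J Hstar ≤ J H ∧ (J Hstar = J H ↔ H = Hstar) :=
  stmt_5_general α hα1 Ahat hPD M H0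
end

section
/- (Core of Theorem 3, JKNet.) Let Â be an N×N real symmetric positive definite matrix all of whose eigenvalues lie in (0, 1], let β > 0, set L̃ = I − Â, and let M be an N×d real matrix (playing the role of H^{(l−1)}Θ^{(l)}). Then the matrix P = Â⁻¹(I + β L̃) is symmetric positive definite, the matrix I − (β/(β+1))·Â is invertible, and the function J(H) = −Tr(Hᵀ M) + (1/2)·Tr(Hᵀ Â⁻¹(I + β L̃) H) over N×d real matrices H attains its global minimum at the unique point H* = (1/(β+1)) · (I − (β/(β+1))·Â)⁻¹ · Â · M. -/
/-!
Write `G = 1 - (β/(β+1)) Â`. Since `1 + β L̃ = (β+1) G` and `1 - Â ⪰ 0`, `G` is positive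
definite, and `P = (β+1)(Â⁻¹ - 1) + 1` is positive definite because the spectrum of `Â⁻¹` lies
in `[1, ∞)`. The point `H*` solves the normal equation `P H* = M`, and for symmetric `P` this
gives `J H - J H* = ½ Tr((H - H*)ᵀ P (H - H*))`, which is nonnegative and vanishes only at
`H = H*`.
-/

open Matrix

namespace Matrix

section Spectrum

variable {n : Type*} [Fintype n] [DecidableEq n] {A : Matrix n n ℝ}

theorem posSemidef_one_sub_of_spectrum_le_one (hA : A.IsHermitian)
    (h : ∀ μ ∈ spectrum ℝ A, μ ≤ 1) : (1 - A).PosSemidef := by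
  refine posSemidef_iff_isHermitian_and_spectrum_nonneg.mpr ⟨isHermitian_one.sub hA, ?_⟩
  rw [← map_one (algebraMap ℝ (Matrix n n ℝ)), ← spectrum.singleton_sub_eq]
  rintro _ ⟨_, rfl, μ, hμ, rfl⟩
  exact sub_nonneg.mpr (h μ hμ)

theorem posSemidef_inv_sub_one_of_spectrum_subset_Ioc (hA : A.IsHermitian)
    (h : ∀ μ ∈ spectrum ℝ A, μ ∈ Set.Ioc 0 1) : (A⁻¹ - 1).PosSemidef := by
  have hunit : IsUnit A := (spectrum.zero_notMem_iff ℝ).mp fun h0 => (h 0 h0).1.false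
  refine posSemidef_iff_isHermitian_and_spectrum_nonneg.mpr ⟨hA.inv.sub isHermitian_one, ?_⟩
  rw [← map_one (algebraMap ℝ (Matrix n n ℝ)), ← spectrum.sub_singleton_eq]
  rintro _ ⟨μ, hμ, _, rfl, rfl⟩
  rw [← hunit.unit_spec, ← coe_units_inv, ← inv_inv μ] at hμ
  have hμ_ge : 1 ≤ μ⁻¹⁻¹ := one_le_inv_iff₀.mpr (h _ (spectrum.of_inv₀_mem_inv hμ))
  rw [inv_inv] at hμ_ge
  exact sub_nonneg.mpr hμ_ge

end Spectrum

open scoped ComplexOrder MatrixOrder in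
theorem PosDef.trace_conjTranspose_mul_mul_same_eq_zero_iff {n m 𝕜 : Type*} [Fintype n]
    [DecidableEq n] [Fintype m] [RCLike 𝕜] {P : Matrix n n 𝕜} (hP : P.PosDef)
    {K : Matrix n m 𝕜} : (Kᴴ * P * K).trace = 0 ↔ K = 0 := by
  obtain ⟨S, hS, rfl⟩ := CStarAlgebra.isStrictlyPositive_iff_eq_star_mul_self.mp
    hP.isStrictlyPositive
  rw [star_eq_conjTranspose, ← Matrix.mul_assoc, Matrix.mul_assoc, ← conjTranspose_mul,
    trace_conjTranspose_mul_self_eq_zero_iff]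
  refine ⟨fun h => ?_, fun h => by simp [h]⟩
  simpa [nonsing_inv_mul_cancel_left _ _ ((isUnit_iff_isUnit_det S).mp hS)] using congr(S⁻¹ * $h)

section TraceQuadratic

variable {n m : Type*} [Fintype n] [Fintype m]

noncomputable def traceQuadratic (P : Matrix n n ℝ) (M H : Matrix n m ℝ) : ℝ :=
  -(Hᵀ * M).trace + (1 / 2) * (Hᵀ * P * H).trace

theorem traceQuadratic_sub_eq_of_mul_eq {P : Matrix n n ℝ} (hP : P.IsHermitian)
    {M X₀ : Matrix n m ℝ} (hX₀ : P * X₀ = M) (X : Matrix n m ℝ) :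
    traceQuadratic P M X - traceQuadratic P M X₀ =
      (1 / 2) * ((X - X₀)ᵀ * P * (X - X₀)).trace := by
  have hcross : (X₀ᵀ * P * X).trace = (Xᵀ * P * X₀).trace := by
    rw [← trace_transpose, transpose_mul, transpose_mul, transpose_transpose,
      ← conjTranspose_eq_transpose_of_trivial P, hP.eq, Matrix.mul_assoc]
  simp only [traceQuadratic, ← hX₀, ← Matrix.mul_assoc, transpose_sub, Matrix.sub_mul,
    Matrix.mul_sub, trace_sub, hcross]
  ring

theorem PosSemidef.traceQuadratic_le {P : Matrix n n ℝ} (hP : P.PosSemidef)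
    {M X₀ : Matrix n m ℝ} (hX₀ : P * X₀ = M) (X : Matrix n m ℝ) :
    traceQuadratic P M X₀ ≤ traceQuadratic P M X := by
  have hquad := (hP.conjTranspose_mul_mul_same (X - X₀)).trace_nonneg
  rw [conjTranspose_eq_transpose_of_trivial] at hquad
  linarith [traceQuadratic_sub_eq_of_mul_eq hP.isHermitian hX₀ X]

theorem PosDef.traceQuadratic_eq_iff [DecidableEq n] {P : Matrix n n ℝ} (hP : P.PosDef)
    {M X₀ : Matrix n m ℝ} (hX₀ : P * X₀ = M) (X : Matrix n m ℝ) :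
    traceQuadratic P M X₀ = traceQuadratic P M X ↔ X = X₀ := by
  rw [eq_comm, ← sub_eq_zero, traceQuadratic_sub_eq_of_mul_eq hP.isHermitian hX₀,
    ← sub_eq_zero (a := X), ← hP.trace_conjTranspose_mul_mul_same_eq_zero_iff,
    conjTranspose_eq_transpose_of_trivial]
  simp only [one_div, mul_eq_zero, inv_eq_zero, two_ne_zero, false_or]

end TraceQuadratic

theorem one_add_smul_one_sub_eq_smul {R : Type*} [Ring R] [Module ℝ R] (a : R) {β : ℝ}
    (hβ : β + 1 ≠ 0) : 1 + β • (1 - a) = (β + 1) • (1 - (β / (β + 1)) • a) := by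
  simp only [smul_sub, smul_smul, mul_div_cancel₀ _ hβ]
  module

section JKNet

variable {n : Type*} [Fintype n] [DecidableEq n] {A : Matrix n n ℝ} {β : ℝ}

theorem posDef_one_sub_div_smul (hA : A.IsHermitian) (h : ∀ μ ∈ spectrum ℝ A, μ ≤ 1)
    (hβ : 0 ≤ β) : (1 - (β / (β + 1)) • A).PosDef := by
  have hβ1 : 0 < β + 1 := by linarith
  have hpos := (PosDef.one.add_posSemidef
    ((posSemidef_one_sub_of_spectrum_le_one hA h).smul hβ)).smul (inv_pos.mpr hβ1)
  rwa [one_add_smul_one_sub_eq_smul A hβ1.ne', smul_smul, inv_mul_cancel₀ hβ1.ne',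
    one_smul] at hpos

theorem inv_mul_one_add_smul_one_sub (hA : IsUnit A.det) :
    A⁻¹ * (1 + β • (1 - A)) = (β + 1) • (A⁻¹ - 1) + 1 := by
  simp only [Matrix.mul_add, Matrix.mul_smul, Matrix.mul_sub, Matrix.mul_one,
    nonsing_inv_mul _ hA]
  module

end JKNet

end Matrix

/-- Core of Theorem 3 (JKNet): for `Â` symmetric positive definite with all eigenvalues in
`(0, 1]`, `β > 0` and `L̃ = I - Â`, the matrix `P = Â⁻¹(I + β L̃)` is symmetric positive
definite, `I - (β/(β+1)) Â` is invertible, and `J(H) = -Tr(Hᵀ M) + (1/2) Tr(Hᵀ P H)`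
attains its global minimum at the unique point
`H* = (1/(β+1)) (I - (β/(β+1)) Â)⁻¹ Â M`. -/
theorem stmt_6 {N d : ℕ} (β : ℝ) (hβ : 0 < β)
    (Ahat : Matrix (Fin N) (Fin N) ℝ) (hPD : Ahat.PosDef)
    (hspec : ∀ μ ∈ spectrum ℝ Ahat, μ ∈ Set.Ioc (0 : ℝ) 1)
    (M : Matrix (Fin N) (Fin d) ℝ) :
    let Ltil : Matrix (Fin N) (Fin N) ℝ := 1 - Ahat
    let P : Matrix (Fin N) (Fin N) ℝ := Ahat⁻¹ * (1 + β • Ltil)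
    let J : Matrix (Fin N) (Fin d) ℝ → ℝ :=
      fun H => -(Hᵀ * M).trace + (1 / 2) * (Hᵀ * P * H).trace
    let Hstar : Matrix (Fin N) (Fin d) ℝ :=
      (1 / (β + 1)) • (((1 : Matrix (Fin N) (Fin N) ℝ) - (β / (β + 1)) • Ahat)⁻¹ * Ahat * M)
    P.PosDef ∧
    IsUnit ((1 : Matrix (Fin N) (Fin N) ℝ) - (β / (β + 1)) • Ahat) ∧
    ∀ H : Matrix (Fin N) (Fin d) ℝ,
      J Hstar ≤ J H ∧ (J Hstar = J H ↔ H = Hstar) := by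
  intro Ltil P J Hstar
  have hβ1 : β + 1 ≠ 0 := by positivity
  have hAdet : IsUnit Ahat.det := hPD.isUnit.map detMonoidHom
  have hG := posDef_one_sub_div_smul hPD.isHermitian (fun μ hμ => (hspec μ hμ).2) hβ.le
  have hPpos : P.PosDef := by
    have hP : P = (β + 1) • (Ahat⁻¹ - 1) + 1 := inv_mul_one_add_smul_one_sub hAdet
    rw [hP]
    exact PosDef.posSemidef_add ((posSemidef_inv_sub_one_of_spectrum_subset_Ioc
      hPD.isHermitian hspec).smul (by positivity)) PosDef.one
  have hnormal : P * Hstar = M := by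
    simp only [P, Hstar, Ltil, one_add_smul_one_sub_eq_smul Ahat hβ1, Matrix.smul_mul,
      Matrix.mul_smul, smul_smul, Matrix.mul_assoc]
    rw [one_div, inv_mul_cancel₀ hβ1, one_smul,
      mul_nonsing_inv_cancel_left _ _ (hG.isUnit.map detMonoidHom),
      nonsing_inv_mul_cancel_left _ _ hAdet]
  exact ⟨hPpos, hG.isUnit, fun H =>
    ⟨hPpos.posSemidef.traceQuadratic_le hnormal H, hPpos.traceQuadratic_eq_iff hnormal H⟩⟩
end
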